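/- Define g_ε(t,ξ) = cos(ω t)·I + (sin(ω t)/ω)·(ε·i·σ₁ + i·ξ·σ₃) with ω = √(ξ²+1), ε ∈ {+1,-1}. For fixed positive reals t₁,t₂,t₃,t₄, the function F(ξ) = (1/2)·Tr( g₁(t₁,ξ)·g₋₁(t₂,ξ)·g₁(t₃,ξ)·g₋₁(t₄,ξ) ) is an even function of ξ: F(-ξ) = F(ξ) for all real ξ. -/

import Mathlib

open Matrix

noncomputable def sigma1 : Matrix (Fin 2) (Fin 2) ℂ := !![0, 1; 1, 0]
noncomputable def sigma3 : Matrix (Fin 2) (Fin 2) ℂ := !![1, 0; 0, -1]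

/-- `g ε t ξ = cos(ωt)·I + (sin(ωt)/ω)·(ε·i·σ₁ + i·ξ·σ₃)`, with `ω = √(ξ²+1)`. -/
noncomputable def gMat (ε t ξ : ℝ) : Matrix (Fin 2) (Fin 2) ℂ :=
  ((Real.cos (Real.sqrt (ξ ^ 2 + 1) * t) : ℂ)) • (1 : Matrix (Fin 2) (Fin 2) ℂ) +
    ((Real.sin (Real.sqrt (ξ ^ 2 + 1) * t) / Real.sqrt (ξ ^ 2 + 1) : ℝ) : ℂ) •
      (((ε : ℂ) * Complex.I) • sigma1 + (Complex.I * (ξ : ℂ)) • sigma3)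

/-- `F(ξ) = ½ Tr(g₁(t₁,ξ) g₋₁(t₂,ξ) g₁(t₃,ξ) g₋₁(t₄,ξ))`. -/
noncomputable def Ffun (t₁ t₂ t₃ t₄ ξ : ℝ) : ℂ :=
  (1 / 2) * (gMat 1 t₁ ξ * gMat (-1) t₂ ξ * gMat 1 t₃ ξ * gMat (-1) t₄ ξ).trace

/-! Conjugation by σ₁ fixes `1` and σ₁ and negates σ₃, so it carries `g_ε(t, ξ)` to
`g_ε(t, -ξ)` while `ω` is unchanged. Conjugation is multiplicative and the trace is
conjugation invariant, hence `F(-ξ) = F(ξ)`. -/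

lemma sigma1_mul_self : sigma1 * sigma1 = 1 := by
  simp [sigma1, Matrix.one_fin_two]

lemma sigma1_mul_sigma3_mul_sigma1 : sigma1 * sigma3 * sigma1 = -sigma3 := by
  ext i j
  fin_cases i <;> fin_cases j <;> simp [sigma1, sigma3]

noncomputable def sigma1Unit : (Matrix (Fin 2) (Fin 2) ℂ)ˣ :=
  ⟨sigma1, sigma1, sigma1_mul_self, sigma1_mul_self⟩

lemma toConjAct_sigma1Unit_smul_gMat (ε t ξ : ℝ) :
    ConjAct.toConjAct sigma1Unit • gMat ε t ξ = gMat ε t (-ξ) := by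
  simp only [ConjAct.units_smul_def, ConjAct.ofConjAct_toConjAct, sigma1Unit, Units.val_mk,
    Units.inv_mk, gMat, neg_sq, Complex.ofReal_neg, mul_add, add_mul, Matrix.mul_smul,
    Matrix.smul_mul, mul_one, one_mul, sigma1_mul_self, sigma1_mul_sigma3_mul_sigma1, mul_neg,
    smul_neg, neg_smul]

theorem stmt_4_general (t₁ t₂ t₃ t₄ : ℝ)
    (ξ : ℝ) : Ffun t₁ t₂ t₃ t₄ (-ξ) = Ffun t₁ t₂ t₃ t₄ ξ := by
  simp only [Ffun, ← toConjAct_sigma1Unit_smul_gMat, ← smul_mul']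
  rw [ConjAct.units_smul_def, Matrix.trace_units_conj]

theorem stmt_4 (t₁ t₂ t₃ t₄ : ℝ) (h₁ : 0 < t₁) (h₂ : 0 < t₂) (h₃ : 0 < t₃) (h₄ : 0 < t₄)
    (ξ : ℝ) : Ffun t₁ t₂ t₃ t₄ (-ξ) = Ffun t₁ t₂ t₃ t₄ ξ :=
  stmt_4_general t₁ t₂ t₃ t₄ ξ
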